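/- Let K be a knot diagram with base point and Gauss diagram G, and suppose K is unknotted by switching crossings s_1, …, s_m (those first traversed on the underpass when traveling from the base point) to make the diagram descending. Then v_2(K) = Σ_j ε(s_j)·lk(L_{s_j}), where L_{s_j} is the two-component link obtained by smoothing the crossing s_j at the moment it is switched. -/

import Mathlib

open scoped Classical

/-- A based Gauss diagram of a knot diagram: `n` signed, oriented chords.
Each chord `i` connects two points on the circle; positions on the circle are
parameterized by `(0,1)`, measured from the base point following the
orientation of the knot.  `head i` is the position of the arrowhead of chord
`i` (on the underpassing branch), `tail i` the position of its arrowtail (on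
the overpassing branch), and `sign i = ±1` is the local writhe of the
corresponding crossing.  All `2n` endpoints are distinct, and are distinct
from the base point (at position `0`). -/
structure BasedGaussDiagram where
  n : ℕ
  head : Fin n → ℝ
  tail : Fin n → ℝ
  sign : Fin n → ℤ
  head_mem : ∀ i, head i ∈ Set.Ioo (0 : ℝ) 1
  tail_mem : ∀ i, tail i ∈ Set.Ioo (0 : ℝ) 1
  head_inj : Function.Injective head
  tail_inj : Function.Injective tail
  head_ne_tail : ∀ i j, head i ≠ tail j
  sign_pm : ∀ i, sign i = 1 ∨ sign i = -1

namespace BasedGaussDiagram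

/-- The "up" configuration: reading from the base point along the orientation
one meets the arrowhead of `c₁`, then the arrowtail of `c₂`, then the
arrowtail of `c₁`, then the arrowhead of `c₂`. -/
def UpPair (G : BasedGaussDiagram) (c₁ c₂ : Fin G.n) : Prop :=
  G.head c₁ < G.tail c₂ ∧ G.tail c₂ < G.tail c₁ ∧ G.tail c₁ < G.head c₂

/-- The "down" configuration: both arrows of the "up" configuration reversed:
one meets the arrowtail of `c₁`, then the arrowhead of `c₂`, then the
arrowhead of `c₁`, then the arrowtail of `c₂`. -/
def DownPair (G : BasedGaussDiagram) (c₁ c₂ : Fin G.n) : Prop :=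
  G.tail c₁ < G.head c₂ ∧ G.head c₂ < G.head c₁ ∧ G.head c₁ < G.tail c₂

/-- The Polyak–Viro pairing `⟨X_up, G⟩ = Σ ε(c₁)ε(c₂)` over all subdiagrams
of `G` isomorphic to the "up" configuration. -/
noncomputable def upCount (G : BasedGaussDiagram) : ℤ :=
  ∑ p : Fin G.n × Fin G.n,
    if G.UpPair p.1 p.2 then G.sign p.1 * G.sign p.2 else 0

/-- `⟨X_down, G⟩ = Σ ε(c₁)ε(c₂)` over all subdiagrams of `G` isomorphic to
the "down" configuration. -/
noncomputable def downCount (G : BasedGaussDiagram) : ℤ :=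
  ∑ p : Fin G.n × Fin G.n,
    if G.DownPair p.1 p.2 then G.sign p.1 * G.sign p.2 else 0

end BasedGaussDiagram

/-- An abstract knot theory, encoding the standard background objects of the
paper: knots, two-component links, the unknot and the trefoil, the Casson
invariant `v₂` (the coefficient of `z²` of the Conway polynomial),
characterized by the skein relation `v₂(K₊) - v₂(K₋) = lk(L₀)` together with
`v₂(unknot) = 0` and `v₂(trefoil) = 1`, and the relation `Diagram G K`
expressing that `G` is a based Gauss diagram of a diagram of the knot `K`. -/
structure KnotTheory where
  Knot : Type
  Link2 : Type
  unknot : Knot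
  trefoil : Knot
  v2 : Knot → ℤ
  lk : Link2 → ℤ
  /-- `SkeinTriple K₊ K₋ L₀`: the three diagrams coincide outside a small
  disk, where they have a positive crossing, a negative crossing, and the
  oriented smoothing, respectively. -/
  SkeinTriple : Knot → Knot → Link2 → Prop
  skein : ∀ Kp Km L, SkeinTriple Kp Km L → v2 Kp - v2 Km = lk L
  v2_unknot : v2 unknot = 0
  v2_trefoil : v2 trefoil = 1
  Diagram : BasedGaussDiagram → Knot → Prop


theorem casson_unknotting_sum_aux (T : KnotTheory) (m : ℕ)
    (Ks : Fin (m + 1) → T.Knot) (ε : Fin m → ℤ) (L : Fin m → T.Link2)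
    (hlast : Ks (Fin.last m) = T.unknot)
    (hstep : ∀ j : Fin m,
      (ε j = 1 ∧ T.SkeinTriple (Ks j.castSucc) (Ks j.succ) (L j)) ∨
      (ε j = -1 ∧ T.SkeinTriple (Ks j.succ) (Ks j.castSucc) (L j))) :
    T.v2 (Ks 0) = ∑ j : Fin m, ε j * T.lk (L j) := by
  induction m with
  | zero =>
      simp only [Finset.univ_eq_empty, Finset.sum_empty]
      have : (0 : Fin 1) = Fin.last 0 := rfl
      rw [this, hlast, T.v2_unknot]
  | succ m ih =>
      have hstep0 : T.v2 (Ks 0) - T.v2 (Ks 1) = ε 0 * T.lk (L 0) := by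
        rcases hstep 0 with ⟨he, hs⟩ | ⟨he, hs⟩
        · have := T.skein _ _ _ hs
          simpa [he, Fin.castSucc_zero, Fin.succ_zero_eq_one] using this
        · have := T.skein _ _ _ hs
          have : T.v2 (Ks 1) - T.v2 (Ks 0) = T.lk (L 0) := by
            simpa [Fin.castSucc_zero, Fin.succ_zero_eq_one] using this
          rw [he]; linarith
      have ihv : T.v2 (Ks 1) = ∑ j : Fin m, ε j.succ * T.lk (L j.succ) := by
        refine ih (fun j => Ks j.succ) (fun j => ε j.succ) (fun j => L j.succ) ?_ ?_
        · show Ks (Fin.succ (Fin.last m)) = T.unknot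
          rw [Fin.succ_last]; exact hlast
        · intro j
          rcases hstep j.succ with ⟨he, hs⟩ | ⟨he, hs⟩
          · left; refine ⟨he, ?_⟩
            simpa only [Fin.succ_castSucc] using hs
          · right; refine ⟨he, ?_⟩
            simpa only [Fin.succ_castSucc] using hs
      rw [Fin.sum_univ_succ, ← ihv]
      linarith

/-- **Unknotting sum formula.** Let `K` be a knot presented by a based
diagram with Gauss diagram `G`, and suppose `K` is unknotted by switching, in
order, the crossings `s₁, …, s_m` (those first traversed on the underpass
when traveling from the base point), producing a descending diagram of the
unknot.  If `Ks j` denotes the knot after `j` switches, `ε j` the sign of the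
`j`-th switched crossing, and `L j` the two-component link obtained by
smoothing that crossing at the moment it is switched (so switching a positive
crossing gives a skein triple `(Ks j, Ks (j+1), L j)` and switching a
negative crossing gives `(Ks (j+1), Ks j, L j)`), then
`v₂(K) = Σⱼ ε(sⱼ)·lk(L_{sⱼ})`. -/
theorem casson_unknotting_sum (T : KnotTheory) (K : T.Knot)
    (G : BasedGaussDiagram) (hGK : T.Diagram G K) (m : ℕ)
    (Ks : Fin (m + 1) → T.Knot) (ε : Fin m → ℤ) (L : Fin m → T.Link2)
    (h0 : Ks 0 = K) (hlast : Ks (Fin.last m) = T.unknot)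
    (hstep : ∀ j : Fin m,
      (ε j = 1 ∧ T.SkeinTriple (Ks j.castSucc) (Ks j.succ) (L j)) ∨
      (ε j = -1 ∧ T.SkeinTriple (Ks j.succ) (Ks j.castSucc) (L j))) :
    T.v2 K = ∑ j : Fin m, ε j * T.lk (L j) := by
  subst h0
  exact casson_unknotting_sum_aux T m Ks ε L hlast hstep
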